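/- Any committee W of size k that is locally optimal for PAV score with threshold n/k² (no swap improves the PAV score by at least n/k²) provides extended justified representation. -/

import Mathlib

open Finset

/-- Average satisfaction of a group `V` of voters w.r.t. committee `W`:
`(1/|V|) * Σ_{i∈V} |A_i ∩ W|`. -/
def avgSat {ι α : Type*} [DecidableEq α] (A : ι → Finset α) (W : Finset α)
    (V : Finset ι) : ℚ :=
  (∑ i ∈ V, ((A i ∩ W).card : ℚ)) / V.card

/-- `V` is an `ℓ`-cohesive group of voters (w.r.t. electorate `N` and committee size `k`):
`V ⊆ N`, `|V| ≥ ⌈ℓ·n/k⌉` and the voters in `V` jointly approve at least `ℓ` candidates. -/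
def Cohesive {ι α : Type*} [DecidableEq α] (N : Finset ι) (A : ι → Finset α)
    (k ℓ : ℕ) (V : Finset ι) : Prop :=
  V ⊆ N ∧ (⌈(ℓ * N.card : ℚ) / k⌉ : ℚ) ≤ V.card ∧
    ∃ T : Finset α, ℓ ≤ T.card ∧ ∀ i ∈ V, T ⊆ A i

/-- The PAV score of committee `W`: `Σ_{i∈N} Σ_{j=1}^{|A_i ∩ W|} 1/j`. -/
def pavSc {ι α : Type*} [DecidableEq α] (N : Finset ι) (A : ι → Finset α)
    (W : Finset α) : ℚ :=
  ∑ i ∈ N, ∑ j ∈ Finset.range (A i ∩ W).card, (1 : ℚ) / (j + 1)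

/-- `W` provides extended justified representation: every `ℓ`-cohesive group
contains a voter approving at least `ℓ` members of `W`. -/
def EJR {ι α : Type*} [DecidableEq α] (N : Finset ι) (A : ι → Finset α)
    (k : ℕ) (W : Finset α) : Prop :=
  ∀ ℓ : ℕ, 0 < ℓ → ∀ V : Finset ι, Cohesive N A k ℓ V → ∃ i ∈ V, ℓ ≤ (A i ∩ W).card

private lemma pav_insert {ι α : Type*} [DecidableEq α] (N : Finset ι) (A : ι → Finset α)
    (W : Finset α) (c : α) (hc : c ∉ W) :
    pavSc N A (insert c W) =
      pavSc N A W + ∑ i ∈ N, (if c ∈ A i then (1:ℚ)/((A i ∩ W).card + 1) else 0) := by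
  unfold pavSc
  rw [← Finset.sum_add_distrib]
  refine Finset.sum_congr rfl fun i _ => ?_
  by_cases h : c ∈ A i
  · have h1 : A i ∩ insert c W = insert c (A i ∩ W) := Finset.inter_insert_of_mem h
    have h2 : c ∉ A i ∩ W := fun hm => hc (Finset.mem_inter.1 hm).2
    rw [h1, Finset.card_insert_of_notMem h2, Finset.sum_range_succ, if_pos h]
  · have h1 : A i ∩ insert c W = A i ∩ W := Finset.inter_insert_of_notMem h
    rw [h1, if_neg h, add_zero]

private lemma pav_erase {ι α : Type*} [DecidableEq α] (N : Finset ι) (A : ι → Finset α)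
    (W : Finset α) (c' : α) (hc' : c' ∈ W) :
    pavSc N A (W.erase c') =
      pavSc N A W - ∑ i ∈ N, (if c' ∈ A i then (1:ℚ)/((A i ∩ W).card) else 0) := by
  unfold pavSc
  rw [eq_sub_iff_add_eq, ← Finset.sum_add_distrib]
  refine Finset.sum_congr rfl fun i _ => ?_
  by_cases h : c' ∈ A i
  · have h1 : A i ∩ W.erase c' = (A i ∩ W).erase c' := Finset.inter_erase _ _ _
    have h2 : c' ∈ A i ∩ W := Finset.mem_inter.2 ⟨h, hc'⟩
    have h3 : (A i ∩ W).card = ((A i ∩ W).erase c').card + 1 := by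
      rw [Finset.card_erase_of_mem h2]
      have := Finset.card_pos.2 ⟨c', h2⟩
      omega
    rw [h1, if_pos h, h3, Finset.sum_range_succ]
    push_cast; ring
  · have h1 : A i ∩ W.erase c' = A i ∩ W := by
      rw [Finset.inter_erase, Finset.erase_eq_of_notMem (fun hm => h (Finset.mem_inter.1 hm).1)]
    rw [h1, if_neg h, add_zero]

/-- A committee that is locally optimal for PAV with threshold n/k² provides EJR. -/
theorem local_optimum_EJR {ι α : Type*} [DecidableEq α]
    (N : Finset ι) (hN : N.Nonempty) (A : ι → Finset α) (C : Finset α)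
    (hA : ∀ i ∈ N, A i ⊆ C) (k : ℕ) (hk : 0 < k)
    (W : Finset α) (hWC : W ⊆ C) (hW : W.card = k)
    (hloc : ∀ c' ∈ W, ∀ c ∈ C \ W,
      pavSc N A (insert c (W.erase c')) < pavSc N A W + (N.card : ℚ) / k ^ 2) :
    EJR N A k W := by
  intro ℓ hℓ V hV
  by_contra hcon
  push_neg at hcon
  obtain ⟨hVN, hVcard, T, hT, hTA⟩ := hV
  have hnQ : (0:ℚ) < N.card := by exact_mod_cast Finset.card_pos.2 hN
  have hkQ : (0:ℚ) < k := by exact_mod_cast hk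
  have hℓQ : (0:ℚ) < ℓ := by exact_mod_cast hℓ
  -- V is nonempty
  have hVQ : (0:ℚ) < V.card := by
    refine lt_of_lt_of_le (lt_of_lt_of_le ?_ (Int.le_ceil _)) hVcard
    positivity
  have hVpos : 0 < V.card := by exact_mod_cast hVQ
  obtain ⟨i₀, hi₀⟩ := Finset.card_pos.1 hVpos
  -- there is a commonly approved candidate outside W
  have hTW : ¬ T ⊆ W := by
    intro hTW
    have : ℓ ≤ (A i₀ ∩ W).card :=
      le_trans hT (Finset.card_le_card (Finset.subset_inter (hTA i₀ hi₀) hTW))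
    exact absurd this (not_le.2 (hcon i₀ hi₀))
  obtain ⟨c, hcT, hcW⟩ := Finset.not_subset.1 hTW
  have hcC : c ∈ C := hA i₀ (hVN hi₀) (hTA i₀ hi₀ hcT)
  set Δ : ℚ := ∑ i ∈ N, (if c ∈ A i then (1:ℚ)/((A i ∩ W).card + 1) else 0) with hΔdef
  -- Δ ≥ n/k
  have hV2 : (ℓ * N.card : ℚ) ≤ V.card * k := by
    have h := (Int.le_ceil ((ℓ * N.card : ℚ)/k)).trans hVcard
    rwa [div_le_iff₀ hkQ] at h
  have hΔ : (N.card : ℚ)/k ≤ Δ := by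
    have step1 : ∀ i ∈ V, (1:ℚ)/ℓ ≤ (if c ∈ A i then (1:ℚ)/((A i ∩ W).card + 1) else 0) := by
      intro i hi
      rw [if_pos (hTA i hi hcT)]
      apply one_div_le_one_div_of_le
      · positivity
      · have h := hcon i hi
        have : ((A i ∩ W).card : ℚ) + 1 ≤ ℓ := by exact_mod_cast Nat.succ_le_of_lt h
        exact this
    calc (N.card:ℚ)/k ≤ (V.card : ℚ)/ℓ := by
          rw [div_le_div_iff₀ hkQ hℓQ]; nlinarith [hV2]
      _ = ∑ _i ∈ V, (1:ℚ)/ℓ := by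
          rw [Finset.sum_const, nsmul_eq_mul]; field_simp
      _ ≤ ∑ i ∈ V, (if c ∈ A i then (1:ℚ)/((A i ∩ W).card + 1) else 0) :=
          Finset.sum_le_sum step1
      _ ≤ Δ := Finset.sum_le_sum_of_subset_of_nonneg hVN
          (fun i _ _ => by split <;> positivity)
  -- total loss bound
  have hloss : (∑ c' ∈ W, ∑ i ∈ N,
      (if c' ∈ A i then (1:ℚ)/((A i ∩ insert c W).card) else 0)) ≤ N.card - Δ := by
    rw [Finset.sum_comm]
    have perI : ∀ i ∈ N,
        (∑ c' ∈ W, if c' ∈ A i then (1:ℚ)/((A i ∩ insert c W).card) else 0)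
          ≤ 1 - (if c ∈ A i then (1:ℚ)/((A i ∩ W).card + 1) else 0) := by
      intro i _
      have hsum : (∑ c' ∈ W, if c' ∈ A i then (1:ℚ)/((A i ∩ insert c W).card) else 0)
          = ((A i ∩ W).card : ℚ) * ((1:ℚ)/((A i ∩ insert c W).card)) := by
        rw [← Finset.sum_filter, Finset.sum_const, nsmul_eq_mul]
        congr 2
        rw [Finset.filter_mem_eq_inter, Finset.inter_comm]
      rw [hsum]
      by_cases h : c ∈ A i
      · have h1 : A i ∩ insert c W = insert c (A i ∩ W) := Finset.inter_insert_of_mem h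
        have h2 : c ∉ A i ∩ W := fun hm => hcW (Finset.mem_inter.1 hm).2
        rw [h1, Finset.card_insert_of_notMem h2, if_pos h]
        have hpos : ((A i ∩ W).card : ℚ) + 1 > 0 := by positivity
        push_cast
        rw [mul_one_div, le_sub_iff_add_le, ← add_div, div_le_one hpos]
      · have h1 : A i ∩ insert c W = A i ∩ W := Finset.inter_insert_of_notMem h
        rw [h1, if_neg h, sub_zero]
        rcases Nat.eq_zero_or_pos (A i ∩ W).card with h0 | h0
        · rw [h0]; norm_num
        · have : ((A i ∩ W).card : ℚ) > 0 := by exact_mod_cast h0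
          field_simp; exact le_refl _
    calc (∑ i ∈ N, ∑ c' ∈ W, if c' ∈ A i then (1:ℚ)/((A i ∩ insert c W).card) else 0)
        ≤ ∑ i ∈ N, (1 - (if c ∈ A i then (1:ℚ)/((A i ∩ W).card + 1) else 0)) :=
          Finset.sum_le_sum perI
      _ = N.card - Δ := by
          rw [Finset.sum_sub_distrib, Finset.sum_const, nsmul_eq_mul, mul_one]
  -- choose a cheap candidate to remove
  have hWne : W.Nonempty := Finset.card_pos.1 (hW ▸ hk)
  have hmin : ∃ c' ∈ W, (∑ i ∈ N,
      if c' ∈ A i then (1:ℚ)/((A i ∩ insert c W).card) else 0) ≤ ((N.card : ℚ) - Δ)/k := by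
    apply Finset.exists_le_of_sum_le hWne
    refine hloss.trans (le_of_eq ?_)
    rw [Finset.sum_const, nsmul_eq_mul, hW]
    field_simp
  obtain ⟨c', hc'W, hc'loss⟩ := hmin
  have hne : c ≠ c' := fun h => hcW (h ▸ hc'W)
  have hrepr : insert c (W.erase c') = (insert c W).erase c' :=
    (Finset.erase_insert_of_ne hne).symm
  have hadd : pavSc N A (insert c W) = pavSc N A W + Δ := pav_insert N A W c hcW
  have herase := pav_erase N A (insert c W) c' (Finset.mem_insert_of_mem hc'W)
  have hfinal := hloc c' hc'W c (Finset.mem_sdiff.2 ⟨hcC, hcW⟩)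
  rw [hrepr, herase, hadd] at hfinal
  set L : ℚ := ∑ i ∈ N, (if c' ∈ A i then (1:ℚ)/((A i ∩ insert c W).card) else 0)
  have h2 : (L : ℚ) * k ≤ N.card - Δ := by rwa [← le_div_iff₀ hkQ]
  have h3 : (N.card : ℚ) ≤ Δ * k := by
    have h := hΔ; rwa [div_le_iff₀ hkQ] at h
  have key : (N.card:ℚ)/k^2 ≤ Δ - L := by
    rw [div_le_iff₀ (by positivity : (0:ℚ) < (k:ℚ)^2)]
    nlinarith [mul_le_mul_of_nonneg_left h2 hkQ.le, mul_le_mul_of_nonneg_left h3 hkQ.le]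
  linarith [hfinal, key]
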